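/- Let l ≥ 1 and let A₀ be the type-D structure over the torus algebra 𝒜 (a 'horizontal chain') with basis {η, λ₁, …, λ_l, η′} and δ¹η = ρ₃ ⊗ λ₁, δ¹λ_m = ρ₂₃ ⊗ λ_{m+1} for 1 ≤ m ≤ l−1, δ¹λ_l = ρ₂ ⊗ η′, δ¹η′ = 0. Define φ : A₀ → 𝒜 ⊗ A₀ by φ(η) = 1 ⊗ η, φ(λ₁) = 1 ⊗ λ₁ + ρ₂ ⊗ η, φ(λ_m) = 1 ⊗ λ_m + 1 ⊗ λ_{m−1} for 2 ≤ m ≤ l, and φ(η′) = 1 ⊗ η′ + ρ₃ ⊗ λ_l. Then φ is a chain map, and there exists an integer ν ≥ 1 such that the ν-fold composite φ ∘ ⋯ ∘ φ equals the identity morphism id_{A₀}; consequently the direct limit of the direct system A₀ →^φ A₀ →^φ ⋯ is isomorphic to A₀. -/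

import Mathlib

/-- The torus algebra: the 8-dimensional `F₂`-algebra with basis
`{ι₀, ι₁, ρ₁, ρ₂, ρ₃, ρ₁₂, ρ₂₃, ρ₁₂₃}`, encoded by its full multiplication table. -/
structure TorusAlg (A : Type) [Ring A] [Algebra (ZMod 2) A] where
  i0 : A
  i1 : A
  r1 : A
  r2 : A
  r3 : A
  r12 : A
  r23 : A
  r123 : A
  basis_indep : LinearIndependent (ZMod 2) ![i0, i1, r1, r2, r3, r12, r23, r123]
  basis_span : Submodule.span (ZMod 2)
      ({i0, i1, r1, r2, r3, r12, r23, r123} : Set A) = ⊤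
  sum_idem : i0 + i1 = 1
  i0_i0 : i0 * i0 = i0
  i1_i1 : i1 * i1 = i1
  i0_i1 : i0 * i1 = 0
  i1_i0 : i1 * i0 = 0
  i0_r1 : i0 * r1 = r1
  r1_i1 : r1 * i1 = r1
  i1_r2 : i1 * r2 = r2
  r2_i0 : r2 * i0 = r2
  i0_r3 : i0 * r3 = r3
  r3_i1 : r3 * i1 = r3
  i0_r12 : i0 * r12 = r12
  r12_i0 : r12 * i0 = r12
  i1_r23 : i1 * r23 = r23
  r23_i1 : r23 * i1 = r23
  i0_r123 : i0 * r123 = r123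
  r123_i1 : r123 * i1 = r123
  r1_r2 : r1 * r2 = r12
  r2_r3 : r2 * r3 = r23
  r1_r23 : r1 * r23 = r123
  r12_r3 : r12 * r3 = r123
  r1_r1 : r1 * r1 = 0
  r1_r3 : r1 * r3 = 0
  r1_r12 : r1 * r12 = 0
  r1_r123 : r1 * r123 = 0
  r2_r1 : r2 * r1 = 0
  r2_r2 : r2 * r2 = 0
  r2_r12 : r2 * r12 = 0
  r2_r23 : r2 * r23 = 0
  r2_r123 : r2 * r123 = 0
  r3_r1 : r3 * r1 = 0
  r3_r2 : r3 * r2 = 0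
  r3_r3 : r3 * r3 = 0
  r3_r12 : r3 * r12 = 0
  r3_r23 : r3 * r23 = 0
  r3_r123 : r3 * r123 = 0
  r12_r1 : r12 * r1 = 0
  r12_r2 : r12 * r2 = 0
  r12_r12 : r12 * r12 = 0
  r12_r23 : r12 * r23 = 0
  r12_r123 : r12 * r123 = 0
  r23_r1 : r23 * r1 = 0
  r23_r2 : r23 * r2 = 0
  r23_r3 : r23 * r3 = 0
  r23_r12 : r23 * r12 = 0
  r23_r23 : r23 * r23 = 0
  r23_r123 : r23 * r123 = 0
  r123_r1 : r123 * r1 = 0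
  r123_r2 : r123 * r2 = 0
  r123_r3 : r123 * r3 = 0
  r123_r12 : r123 * r12 = 0
  r123_r23 : r123 * r23 = 0
  r123_r123 : r123 * r123 = 0

variable {A : Type} [Ring A] [Algebra (ZMod 2) A]

/-- Composition of morphisms of type-D structures, in matrix form. -/
def matComp {ι κ σ : Type} [Fintype κ] (F : ι → κ → A) (G : κ → σ → A) :
    ι → σ → A :=
  fun i s => ∑ j, F i j * G j s

/-- The identity morphism, in matrix form. -/
def matId {ι : Type} [DecidableEq ι] : ι → ι → A :=
  fun i j => if i = j then 1 else 0

/-- The differential of a morphism of type-D structures, in matrix form: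
`∂F = F · d_N + d_M · F`. -/
def matDiff {ι κ : Type} [Fintype ι] [Fintype κ]
    (dM : ι → ι → A) (dN : κ → κ → A) (F : ι → κ → A) : ι → κ → A :=
  fun i k => (∑ j, F i j * dN j k) + (∑ j, dM i j * F j k)

/-- The type-D structure equation `(μ ⊗ id) ∘ (id ⊗ δ¹) ∘ δ¹ = 0`, in matrix form. -/
def IsTypeD {ι : Type} [Fintype ι] (d : ι → ι → A) : Prop :=
  ∀ i k, (∑ j, d i j * d j k) = 0

/-- A morphism is a chain map when its differential vanishes. -/
def IsChainMap {ι κ : Type} [Fintype ι] [Fintype κ]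
    (dM : ι → ι → A) (dN : κ → κ → A) (F : ι → κ → A) : Prop :=
  matDiff dM dN F = 0

/-- Homotopy equivalence of two type-D structures, in matrix form:
chain maps `F`, `G` with `G ∘ F + id = ∂H` and `F ∘ G + id = ∂H'`. -/
def HtpyEquiv {ι κ : Type} [Fintype ι] [Fintype κ] [DecidableEq ι] [DecidableEq κ]
    (dM : ι → ι → A) (dN : κ → κ → A) : Prop :=
  ∃ (F : ι → κ → A) (G : κ → ι → A) (H : ι → ι → A) (H' : κ → κ → A),
    IsChainMap dM dN F ∧ IsChainMap dN dM G ∧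
    matComp F G + matId = matDiff dM dM H ∧
    matComp G F + matId = matDiff dN dN H'

/-- The `A`-linear map `𝒜 ⊗ M → 𝒜 ⊗ N` induced by a matrix-form morphism of
type-D structures, in the coordinates `𝒜 ⊗ M ≅ (ι → 𝒜)`:
`a ⊗ e_j ↦ Σ_k a·F j k ⊗ e_k`. -/
def matMap {ι κ : Type} [Fintype ι] (F : ι → κ → A) :
    (ι → A) →ₗ[A] (κ → A) where
  toFun v := fun k => ∑ j, v j * F j k
  map_add' u v := by
    funext k
    simp [add_mul, Finset.sum_add_distrib]
  map_smul' a v := by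
    funext k
    simp [Finset.mul_sum, mul_assoc]

/-- Iterated composition (`n`-fold power) of an endomorphism matrix;
`matPow F 0` is the identity morphism. -/
def matPow {ι : Type} [Fintype ι] [DecidableEq ι] (F : ι → ι → A) :
    ℕ → (ι → ι → A)
  | 0 => matId
  | n + 1 => matComp F (matPow F n)

/-- The differential of the horizontal chain `A₀` with basis
`{η = 0, λ₁ = 1, …, λ_l = l, η′ = l+1}`:
`δ¹η = ρ₃ ⊗ λ₁`, `δ¹λ_m = ρ₂₃ ⊗ λ_{m+1}` for `1 ≤ m ≤ l-1`,
`δ¹λ_l = ρ₂ ⊗ η′`, `δ¹η′ = 0`. -/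
def dH (T : TorusAlg A) (l : ℕ) : Fin (l + 2) → Fin (l + 2) → A :=
  fun i j =>
    if (i : ℕ) = 0 ∧ (j : ℕ) = 1 then T.r3
    else if 1 ≤ (i : ℕ) ∧ (i : ℕ) + 1 ≤ l ∧ (j : ℕ) = (i : ℕ) + 1 then T.r23
    else if (i : ℕ) = l ∧ (j : ℕ) = l + 1 then T.r2
    else 0

/-- The morphism `φ`: `φ(η) = 1 ⊗ η`, `φ(λ₁) = 1 ⊗ λ₁ + ρ₂ ⊗ η`,
`φ(λ_m) = 1 ⊗ λ_m + 1 ⊗ λ_{m-1}` for `2 ≤ m ≤ l`, `φ(η′) = 1 ⊗ η′ + ρ₃ ⊗ λ_l`. -/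
def fH (T : TorusAlg A) (l : ℕ) : Fin (l + 2) → Fin (l + 2) → A :=
  fun i j =>
    if (i : ℕ) = (j : ℕ) then 1
    else if (i : ℕ) = 1 ∧ (j : ℕ) = 0 then T.r2
    else if 2 ≤ (i : ℕ) ∧ (i : ℕ) ≤ l ∧ (j : ℕ) + 1 = (i : ℕ) then 1
    else if (i : ℕ) = l + 1 ∧ (j : ℕ) = l then T.r3
    else 0

/-- The directed system `𝒜 ⊗ A₀ → 𝒜 ⊗ A₀ → ⋯` induced by iterating `φ`. -/
noncomputable def connH (T : TorusAlg A) (l : ℕ) :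
    ∀ i j : ℕ, i ≤ j → (Fin (l + 2) → A) →ₗ[A] (Fin (l + 2) → A) :=
  fun i j _ => (matMap (fH T l) ^ (j - i) : Module.End A (Fin (l + 2) → A))

/-!
Write `φ = 1 + N`, where `N` lowers the index in the ordered basis `η, λ₁, …, λ_l, η′` by one
and `δ¹` raises it by one. Both `N δ¹` and `δ¹ N` are `ρ₂₃` on every `λ_m` and vanish on `η`,
`η′`, so `φ` commutes with `δ¹`, which over `𝔽₂` is the chain map equation. As `N` is
nilpotent and `2 = 0`, `φ ^ 2 ^ k = 1 + N ^ 2 ^ k = 1` once `2 ^ k ≥ l + 2`. Hence `φ` is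
invertible, and the direct limit of `A₀ →φ A₀ →φ ⋯` is identified with its first term
through `of 0`, with inverse `of i x ↦ φ⁻ⁱ x`; since `φ` commutes with `δ¹`, so does this
identification.
-/

section CharTwo

variable {R : Type*} [Ring R] [Module (ZMod 2) R]

theorem one_add_pow_two_pow (N : R) (s : ℕ) : (1 + N) ^ 2 ^ s = 1 + N ^ 2 ^ s := by
  induction s with
  | zero => simp
  | succ s ih =>
    rw [pow_succ, pow_mul, pow_mul, ih, sq, sq, add_mul, mul_add, mul_add, one_mul, one_mul,
      mul_one, add_assoc, ← add_assoc (N ^ 2 ^ s), ZModModule.add_self, zero_add]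

theorem one_add_pow_two_pow_eq_one {N : R} {n : ℕ} (hN : N ^ n = 0) : (1 + N) ^ 2 ^ n = 1 := by
  rw [one_add_pow_two_pow, pow_eq_zero_of_le Nat.lt_two_pow_self.le hN, add_zero]

end CharTwo

namespace Matrix

variable {R : Type*}

theorem pow_apply_eq_zero_of_strictLower [Semiring R] {n : ℕ} {N : Matrix (Fin n) (Fin n) R}
    (hN : ∀ i j, i ≤ j → N i j = 0) (k : ℕ) (i j : Fin n) (hij : (i : ℕ) < j + k) :
    (N ^ k) i j = 0 := by
  induction k generalizing i with
  | zero => exact one_apply_ne (by rintro rfl; omega)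
  | succ k ih =>
    rw [pow_succ', mul_apply]
    refine Finset.sum_eq_zero fun m _ => ?_
    rcases le_or_gt i m with him | hmi
    · rw [hN i m him, zero_mul]
    · rw [ih m (by omega), mul_zero]

theorem pow_card_eq_zero_of_strictLower [Semiring R] {n : ℕ} {N : Matrix (Fin n) (Fin n) R}
    (hN : ∀ i j, i ≤ j → N i j = 0) : N ^ n = 0 := by
  ext i j
  exact pow_apply_eq_zero_of_strictLower hN n i j (by omega)

section Superdiagonal

variable [NonUnitalNonAssocSemiring R] {n : ℕ} {d : Matrix (Fin (n + 1)) (Fin (n + 1)) R}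

theorem mul_apply_zero_of_superdiag (hd : ∀ j k : Fin (n + 1), (j : ℕ) + 1 ≠ k → d j k = 0)
    (X : Matrix (Fin (n + 1)) (Fin (n + 1)) R) (i : Fin (n + 1)) : (X * d) i 0 = 0 :=
  (mul_apply ..).trans <| Finset.sum_eq_zero fun j _ => by rw [hd j 0 (by simp), mul_zero]

theorem mul_apply_succ_of_superdiag (hd : ∀ j k : Fin (n + 1), (j : ℕ) + 1 ≠ k → d j k = 0)
    (X : Matrix (Fin (n + 1)) (Fin (n + 1)) R) (i : Fin (n + 1)) (k : Fin n) :
    (X * d) i k.succ = X i k.castSucc * d k.castSucc k.succ :=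
  (mul_apply ..).trans <| Fintype.sum_eq_single _ fun j hj => by
    rw [hd j _ fun h => hj (Fin.ext (by simp at h ⊢; omega)), mul_zero]

theorem superdiag_mul_apply_last (hd : ∀ j k : Fin (n + 1), (j : ℕ) + 1 ≠ k → d j k = 0)
    (X : Matrix (Fin (n + 1)) (Fin (n + 1)) R) (k : Fin (n + 1)) : (d * X) (Fin.last n) k = 0 :=
  (mul_apply ..).trans <| Finset.sum_eq_zero fun j _ => by rw [hd _ j (by simp; omega), zero_mul]

theorem superdiag_mul_apply_castSucc (hd : ∀ j k : Fin (n + 1), (j : ℕ) + 1 ≠ k → d j k = 0)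
    (X : Matrix (Fin (n + 1)) (Fin (n + 1)) R) (i : Fin n) (k : Fin (n + 1)) :
    (d * X) i.castSucc k = d i.castSucc i.succ * X i.succ k :=
  (mul_apply ..).trans <| Fintype.sum_eq_single _ fun j hj => by
    rw [hd _ j fun h => hj (Fin.ext (by simp at h ⊢; omega)), zero_mul]

end Superdiagonal

end Matrix

namespace Module.DirectLimit

variable {R V : Type*} [Semiring R] [AddCommMonoid V] [Module R V] (u : (Module.End R V)ˣ)

abbrev powSystem : ∀ i j : ℕ, i ≤ j → V →ₗ[R] V := fun i j _ => (u : Module.End R V) ^ (j - i)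

theorem inv_pow_mul_pow_sub {i j : ℕ} (hij : i ≤ j) :
    (↑(u⁻¹ ^ j) * (u : Module.End R V) ^ (j - i) : Module.End R V) = ↑(u⁻¹ ^ i) := by
  rw [← Units.val_pow_eq_pow_val, ← Units.val_mul, inv_pow, inv_pow, pow_sub _ hij]
  group

noncomputable def powInvLift : DirectLimit (fun _ => V) (powSystem u) →ₗ[R] V :=
  lift R ℕ _ _ (fun i => ↑(u⁻¹ ^ i)) fun _ _ hij x => by
    rw [← Module.End.mul_apply, inv_pow_mul_pow_sub u hij]

noncomputable def powEquiv : DirectLimit (fun _ => V) (powSystem u) ≃ₗ[R] V :=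
  LinearEquiv.ofLinearMap (powInvLift u) (of R ℕ _ (powSystem u) 0)
    (LinearMap.ext fun x => by simp [powInvLift])
    (hom_ext fun i => LinearMap.ext fun x => by
      have hu : (u : Module.End R V) ^ (i - 0) * ↑(u⁻¹ ^ i) = 1 := by
        rw [Nat.sub_zero, ← Units.val_pow_eq_pow_val, ← Units.val_mul, inv_pow, mul_inv_cancel,
          Units.val_one]
      rw [LinearMap.comp_apply, LinearMap.comp_apply, powInvLift, lift_of,
        ← of_f (hij := Nat.zero_le i), ← Module.End.mul_apply, hu, Module.End.one_apply,
        LinearMap.id_comp])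

theorem powEquiv_of (i : ℕ) (x : V) :
    powEquiv u (of R ℕ _ (powSystem u) i x) = (↑(u⁻¹ ^ i) : Module.End R V) x := by
  rw [powEquiv, LinearEquiv.coe_ofLinearMap, powInvLift, lift_of]

variable {u}

theorem commute_powSystem {D : Module.End R V} (hD : Commute (u : Module.End R V) D)
    (i j : ℕ) (hij : i ≤ j) : D ∘ₗ powSystem u i j hij = powSystem u i j hij ∘ₗ D :=
  (hD.pow_left _).eq.symm

theorem powEquiv_map {D : Module.End R V} (hD : Commute (u : Module.End R V) D)
    (z : DirectLimit (fun _ => V) (powSystem u)) :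
    powEquiv u (map (fun _ => D) (commute_powSystem hD) z) = D (powEquiv u z) := by
  induction z using DirectLimit.induction_on with
  | ih i x =>
    rw [map_apply_of, powEquiv_of, powEquiv_of, Units.val_pow_eq_pow_val, ← Module.End.mul_apply,
      (hD.units_inv_left.pow_left i).eq, Module.End.mul_apply]

end Module.DirectLimit

section MatrixForm

variable {R ι : Type} [Ring R] [Fintype ι]

theorem matMap_mul (F G : Matrix ι ι R) : matMap (F * G) = matMap G * matMap F :=
  LinearMap.ext fun v => (Matrix.vecMul_vecMul v F G).symm

theorem matMap_one [DecidableEq ι] : matMap (1 : Matrix ι ι R) = 1 :=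
  LinearMap.ext Matrix.vecMul_one

theorem matMap_pow [DecidableEq ι] (F : Matrix ι ι R) (n : ℕ) :
    matMap (F ^ n) = matMap F ^ n := by
  induction n with
  | zero => exact matMap_one
  | succ n ih => rw [pow_succ', matMap_mul, ih, pow_succ]

theorem Commute.matMap {F G : Matrix ι ι R} (h : Commute F G) :
    Commute (matMap F) (matMap G) := by
  rw [Commute, SemiconjBy, ← matMap_mul, ← matMap_mul, h.eq]

theorem of_matPow [DecidableEq ι] (F : ι → ι → R) (n : ℕ) :
    Matrix.of (matPow F n) = Matrix.of F ^ n := by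
  induction n with
  | zero => rfl
  | succ n ih => rw [pow_succ', ← ih]; rfl

theorem isChainMap_of_commute [Module (ZMod 2) R] {d F : ι → ι → R}
    (h : Commute (Matrix.of F) (Matrix.of d)) : IsChainMap d d F := by
  funext i k
  change (Matrix.of F * Matrix.of d) i k + (Matrix.of d * Matrix.of F) i k = 0
  rw [h.eq, ZModModule.add_self]

end MatrixForm

section HorizontalChain

variable (T : TorusAlg A) (l : ℕ)

def fHLower : Matrix (Fin (l + 2)) (Fin (l + 2)) A :=
  Matrix.of fun i j =>
    if (i : ℕ) = 1 ∧ (j : ℕ) = 0 then T.r2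
    else if 2 ≤ (i : ℕ) ∧ (i : ℕ) ≤ l ∧ (j : ℕ) + 1 = (i : ℕ) then 1
    else if (i : ℕ) = l + 1 ∧ (j : ℕ) = l then T.r3
    else 0

/-- `ρ₂₃` on each `λ_m`, and `0` on `η` and `η′`. -/
def r23Diag : Matrix (Fin (l + 2)) (Fin (l + 2)) A :=
  Matrix.diagonal fun i => if 1 ≤ (i : ℕ) ∧ (i : ℕ) ≤ l then T.r23 else 0

theorem of_fH : Matrix.of (fH T l) = 1 + fHLower T l := by
  ext i j
  simp only [Matrix.of_apply, Matrix.add_apply, Matrix.one_apply, fH, fHLower, Fin.ext_iff]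
  split_ifs <;> first | omega | simp

theorem fHLower_apply_of_le {i j : Fin (l + 2)} (hij : i ≤ j) : fHLower T l i j = 0 := by
  simp only [fHLower, Matrix.of_apply, Fin.le_def] at hij ⊢
  split_ifs <;> first | omega | rfl

theorem of_fH_pow_two_pow : Matrix.of (fH T l) ^ 2 ^ (l + 2) = 1 := by
  rw [of_fH]
  exact one_add_pow_two_pow_eq_one
    (Matrix.pow_card_eq_zero_of_strictLower fun _ _ => fHLower_apply_of_le T l)

theorem dH_apply_of_ne {j k : Fin (l + 2)} (hjk : (j : ℕ) + 1 ≠ k) :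
    Matrix.of (dH T l) j k = 0 := by
  simp only [dH, Matrix.of_apply]
  split_ifs <;> first | omega | rfl

variable {l}

theorem fHLower_mul_dH (hl : 1 ≤ l) : fHLower T l * Matrix.of (dH T l) = r23Diag T l := by
  ext i k
  cases k using Fin.cases with
  | zero =>
    rw [Matrix.mul_apply_zero_of_superdiag (fun _ _ => dH_apply_of_ne T l)]
    simp only [r23Diag, Matrix.diagonal_apply, Fin.ext_iff, Fin.val_zero]
    split_ifs <;> first | omega | rfl
  | succ k =>
    rw [Matrix.mul_apply_succ_of_superdiag (fun _ _ => dH_apply_of_ne T l)]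
    simp only [fHLower, dH, r23Diag, Matrix.of_apply, Matrix.diagonal_apply, Fin.ext_iff,
      Fin.val_succ, Fin.val_castSucc, and_true]
    split_ifs <;> first | omega | simp [T.r2_r3, T.r3_r2]

theorem dH_mul_fHLower : Matrix.of (dH T l) * fHLower T l = r23Diag T l := by
  ext i k
  cases i using Fin.lastCases with
  | last =>
    rw [Matrix.superdiag_mul_apply_last (fun _ _ => dH_apply_of_ne T l)]
    simp only [r23Diag, Matrix.diagonal_apply, Fin.ext_iff, Fin.val_last]
    split_ifs <;> first | omega | rfl
  | cast i =>
    rw [Matrix.superdiag_mul_apply_castSucc (fun _ _ => dH_apply_of_ne T l)]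
    simp only [fHLower, dH, r23Diag, Matrix.of_apply, Matrix.diagonal_apply, Fin.ext_iff,
      Fin.val_succ, Fin.val_castSucc, and_true]
    split_ifs <;> first | omega | simp [T.r2_r3, T.r3_r2]

theorem commute_fH_dH (hl : 1 ≤ l) : Commute (Matrix.of (fH T l)) (Matrix.of (dH T l)) := by
  rw [of_fH]
  exact (Commute.one_left _).add_left ((fHLower_mul_dH T hl).trans (dH_mul_fHLower T).symm)

end HorizontalChain

theorem statement8 (A : Type) [Ring A] [Algebra (ZMod 2) A] (T : TorusAlg A)
    (l : ℕ) (hl : 1 ≤ l) :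
    -- `φ` is a chain map
    IsChainMap (dH T l) (dH T l) (fH T l) ∧
    -- some `ν`-fold composite of `φ` is the identity morphism
    (∃ ν : ℕ, 1 ≤ ν ∧ matPow (fH T l) ν = matId) ∧
    -- consequently the direct limit of the direct system is isomorphic to `A₀`,
    -- compatibly with the induced differentials
    (∃ Dlim : Module.DirectLimit (R := A) (fun _ : ℕ => (Fin (l + 2) → A)) (connH T l) →ₗ[A]
          Module.DirectLimit (R := A) (fun _ : ℕ => (Fin (l + 2) → A)) (connH T l),
      (∀ (i : ℕ) (v : Fin (l + 2) → A),
        Dlim (Module.DirectLimit.of A ℕ (fun _ : ℕ => (Fin (l + 2) → A)) (connH T l) i v) =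
          Module.DirectLimit.of A ℕ (fun _ : ℕ => (Fin (l + 2) → A)) (connH T l) i
            (matMap (dH T l) v)) ∧
      ∃ e : Module.DirectLimit (R := A) (fun _ : ℕ => (Fin (l + 2) → A)) (connH T l) ≃ₗ[A]
          (Fin (l + 2) → A),
        ∀ z, e (Dlim z) = matMap (dH T l) (e z)) := by
  have hcomm := commute_fH_dH T hl
  have hperiod : matPow (fH T l) (2 ^ (l + 2)) = matId := by
    rw [← Matrix.of.injective.eq_iff, of_matPow, of_fH_pow_two_pow]
    rfl
  have hunit : IsUnit (matMap (fH T l)) := by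
    refine IsUnit.of_pow_eq_one ?_ (pow_ne_zero (l + 2) two_ne_zero)
    exact (matMap_pow (Matrix.of (fH T l)) _).symm.trans (by rw [of_fH_pow_two_pow, matMap_one])
  have hcomm' : Commute (hunit.unit : Module.End A (Fin (l + 2) → A)) (matMap (dH T l)) :=
    hcomm.matMap
  refine ⟨isChainMap_of_commute hcomm, ⟨_, Nat.one_le_two_pow, hperiod⟩,
    Module.DirectLimit.map _ (Module.DirectLimit.commute_powSystem hcomm'),
    fun i v => Module.DirectLimit.map_apply_of _ _ _,
    Module.DirectLimit.powEquiv hunit.unit, Module.DirectLimit.powEquiv_map hcomm'⟩
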